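/- arXiv:1509.09193 — 2 statements merged into one kernel-verified Lean document; each statement's English description precedes it below -/
import Mathlib

section
/- Let d, w₁, w₂ be odd positive integers and χ a Dirichlet character of conductor d. With 𝓔_{n,λ,χ}(x) the generalized degenerate Euler polynomials attached to χ and R_k(m, λ|χ) := 2 ∑_{l=0}^{m} (−1)^l χ(l) (l|λ)_k, one has for all l ≥ 0: ∑_{i=0}^{l} C(l,i) 𝓔_{i, λ/w₁, χ}(w₂ x) w₁^i w₂^{l−i} R_{l−i}(d w₁ − 1, λ/w₂ | χ) = ∑_{i=0}^{l} C(l,i) 𝓔_{i, λ/w₂, χ}(w₁ x) w₂^i w₁^{l−i} R_{l−i}(d w₂ − 1, λ/w₁ | χ), as an identity of polynomials in x (for a fixed nonzero parameter λ ∈ ℂ, or in the field ℚ(λ) of rational functions). -/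
open scoped Nat

/-- The degenerate falling factorial `(x|λ)_n = x(x−λ)⋯(x−(n−1)λ)`. -/
noncomputable def degFall {R : Type*} [CommRing R] (x lam : R) (n : ℕ) : R :=
  ∏ j ∈ Finset.range n, (x - (j : R) * lam)

/-- `(1+λt)^{y/λ} := ∑_{n≥0} (y|λ)_n tⁿ/n!` as a formal power series. -/
noncomputable def degSeries {R : Type*} [CommRing R] [Algebra ℚ R] (y lam : R) :
    PowerSeries R :=
  PowerSeries.mk fun n => (n ! : ℚ)⁻¹ • degFall y lam n

/-- The generating identity defining the generalized degenerate Euler polynomials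
`𝓔_{n,λ,χ}(x)` attached to χ, with parameter `mu`:
`((1+μt)^{d/μ}+1)·∑ 𝓔_{n,μ,χ}(x) tⁿ/n! = 2(∑_{a<d}(−1)^a χ(a)(1+μt)^{a/μ})(1+μt)^{x/μ}`. -/
noncomputable def genDegEulerRel (d : ℕ) (χ : DirichletCharacter ℂ d) (mu : ℂ)
    (E : ℕ → Polynomial ℂ) : Prop :=
  (degSeries (Polynomial.C (d : ℂ)) (Polynomial.C mu) + 1) *
      PowerSeries.mk (fun n => (n ! : ℂ)⁻¹ • E n)
    = 2 * ((∑ a ∈ Finset.range d,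
        ((-1 : ℂ) ^ a * χ (a : ZMod d)) • degSeries (Polynomial.C (a : ℂ)) (Polynomial.C mu)) *
        degSeries Polynomial.X (Polynomial.C mu))

/-- `R_k(m, μ|χ) := 2 ∑_{l=0}^{m} (−1)^l χ(l) (l|μ)_k`. -/
noncomputable def Rsum (d : ℕ) (χ : DirichletCharacter ℂ d) (k m : ℕ) (mu : ℂ) : ℂ :=
  2 * ∑ l ∈ Finset.range (m + 1), (-1 : ℂ) ^ l * χ (l : ZMod d) * degFall (l : ℂ) mu k

/-!
Write `e(y) = (1+λt)^{y/λ}`, `u = e(w₁)`, `v = e(w₂)` and `T(s, m) = ∑_{l<m} (-1)^l χ(l) s^l`, so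
that `u^{w₂} = v^{w₁} = e(w₁w₂) =: z`. Substituting `t ↦ w₁t`, `x ↦ w₂x` in the generating identity
of `𝓔_{·,λ/w₁,χ}` turns it into `(u^d + 1) M₁ = 2 e(w₁w₂x) T(u, d)`, where `M₁` is the egf of
`w₁^i 𝓔_{i,λ/w₁,χ}(w₂x)`. As `d` and `w₂` are odd and `χ` is `d`-periodic, multiplying by
`∑_{j<w₂} (-u^d)^j` gives `(z^d + 1) M₁ = 2 e(w₁w₂x) T(u, dw₂)`. Hence `(z^d + 1) M₁ T(v, dw₁)` is
symmetric in `w₁, w₂`; cancel the unit `z^d + 1` and compare coefficients of `tˡ`, those of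
`2 T(v, dw₁)` being `w₂^k R_k(dw₁ - 1, λ/w₂ | χ)`.
-/

open Finset

section DegFall

variable {R S : Type*} [CommRing R] [CommRing S]

theorem degFall_succ (x lam : R) (n : ℕ) :
    degFall x lam (n + 1) = degFall x lam n * (x - n * lam) :=
  prod_range_succ _ _

theorem degFall_zero_succ (lam : R) (n : ℕ) : degFall 0 lam (n + 1) = 0 :=
  prod_eq_zero (mem_range.2 n.succ_pos) (by simp)

theorem map_degFall (f : R →+* S) (x lam : R) (n : ℕ) :
    f (degFall x lam n) = degFall (f x) (f lam) n := by
  simp [degFall, map_prod]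

theorem degFall_mul_mul (c x lam : R) (n : ℕ) :
    degFall (c * x) (c * lam) n = c ^ n * degFall x lam n := by
  rw [degFall, degFall, ← card_range n, ← prod_const, card_range, ← prod_mul_distrib]
  exact prod_congr rfl fun j _ => by ring

theorem degFall_add (x y lam : R) (n : ℕ) :
    degFall (x + y) lam n =
      ∑ ij ∈ antidiagonal n, (n.choose ij.1 : R) * (degFall x lam ij.1 * degFall y lam ij.2) := by
  induction n with
  | zero => simp [degFall]
  | succ n ih =>
    rw [sum_antidiagonal_choose_succ_mul (fun i j => degFall x lam i * degFall y lam j),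
      degFall_succ, ih, sum_mul, ← sum_add_distrib]
    refine sum_congr rfl fun ij hij => ?_
    have hn : n = ij.1 + ij.2 := (mem_antidiagonal.1 hij).symm
    rw [Nat.choose_symm_of_eq_add hn, degFall_succ, degFall_succ, hn]
    push_cast
    ring

end DegFall

section Egf

variable {A : Type*} [CommRing A] [Algebra ℚ A]

noncomputable def egf (a : ℕ → A) : PowerSeries A :=
  PowerSeries.mk fun n => (n ! : ℚ)⁻¹ • a n

theorem coeff_egf (a : ℕ → A) (n : ℕ) : PowerSeries.coeff n (egf a) = (n ! : ℚ)⁻¹ • a n :=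
  PowerSeries.coeff_mk _ _

theorem egf_injective : Function.Injective (egf : (ℕ → A) → PowerSeries A) := by
  intro a b h
  funext n
  have := congrArg (PowerSeries.coeff n) h
  rwa [coeff_egf, coeff_egf, smul_right_inj (inv_ne_zero (by positivity))] at this

theorem egf_mul (a b : ℕ → A) :
    egf a * egf b =
      egf fun n => ∑ ij ∈ antidiagonal n, (n.choose ij.1 : A) * (a ij.1 * b ij.2) := by
  ext n
  rw [PowerSeries.coeff_mul, coeff_egf, smul_sum]
  refine sum_congr rfl fun ij hij => ?_
  obtain rfl : ij.1 + ij.2 = n := mem_antidiagonal.1 hij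
  rw [coeff_egf, coeff_egf, smul_mul_smul_comm, ← nsmul_eq_mul, ← Nat.cast_smul_eq_nsmul ℚ,
    smul_smul, Nat.cast_add_choose]
  congr 1
  field_simp

end Egf

section DegSeries

variable {R S : Type*} [CommRing R] [Algebra ℚ R] [CommRing S] [Algebra ℚ S]

theorem degSeries_eq_egf (y lam : R) : degSeries y lam = egf (degFall y lam) := rfl

theorem degSeries_add (x y lam : R) :
    degSeries (x + y) lam = degSeries x lam * degSeries y lam := by
  simp only [degSeries_eq_egf, egf_mul, ← degFall_add]

theorem degSeries_zero (lam : R) : degSeries 0 lam = 1 := by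
  ext (_ | n)
  · simp [degSeries, degFall]
  · simp only [degSeries, PowerSeries.coeff_mk, degFall_zero_succ, smul_zero,
      PowerSeries.coeff_one, Nat.succ_ne_zero, if_false]

theorem degSeries_pow (x lam : R) (n : ℕ) : degSeries x lam ^ n = degSeries (n * x) lam := by
  induction n with
  | zero => simp [degSeries_zero]
  | succ n ih => rw [pow_succ, ih, ← degSeries_add]; push_cast; ring_nf

theorem map_degSeries (f : R →+* S) (y lam : R) :
    PowerSeries.map f (degSeries y lam) = degSeries (f y) (f lam) := by
  ext n
  simp [degSeries, map_rat_smul, map_degFall]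

theorem rescale_degSeries (c y lam : R) :
    PowerSeries.rescale c (degSeries y lam) = degSeries (c * y) (c * lam) := by
  ext n
  simp [degSeries, degFall_mul_mul]

theorem isUnit_degSeries_add_one (y lam : R) : IsUnit (degSeries y lam + 1) := by
  have two : IsUnit (2 : R) := by
    simpa only [map_ofNat] using (isUnit_of_invertible (2 : ℚ)).map (algebraMap ℚ R)
  rw [PowerSeries.isUnit_iff_constantCoeff, map_add,
    ← PowerSeries.coeff_zero_eq_constantCoeff_apply]
  simpa [degSeries, degFall, one_add_one_eq_two] using two

end DegSeries

theorem Odd.add_one_mul_neg_geom_sum {S : Type*} [CommRing S] {w : ℕ} (hw : Odd w) (t : S) :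
    (t + 1) * ∑ j ∈ range w, (-t) ^ j = t ^ w + 1 := by
  have h := mul_neg_geom_sum (-t) w
  rw [sub_neg_eq_add, hw.neg_pow] at h
  linear_combination h

section AltTwistedSum

variable {R S : Type*} [CommRing R] [CommRing S] [Algebra R S] {d : ℕ}
  (χ : DirichletCharacter R d)

noncomputable def altTwistedSum (s : S) (m : ℕ) : S :=
  ∑ l ∈ range m, ((-1) ^ l * χ l) • s ^ l

theorem map_altTwistedSum {S' : Type*} [CommRing S'] [Algebra R S'] (f : S →ₐ[R] S') (s : S)
    (m : ℕ) : f (altTwistedSum χ s m) = altTwistedSum χ (f s) m := by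
  simp [altTwistedSum]

theorem altTwistedSum_mul (hd : Odd d) (s : S) (w : ℕ) :
    altTwistedSum χ s (d * w) = altTwistedSum χ s d * ∑ j ∈ range w, (-s ^ d) ^ j := by
  induction w with
  | zero => simp [altTwistedSum]
  | succ w ih =>
    unfold altTwistedSum at ih ⊢
    rw [mul_add_one, sum_range_add, ih, sum_range_succ, mul_add]
    congr 1
    rw [sum_mul]
    refine sum_congr rfl fun a _ => ?_
    have hχ : χ ((d * w + a : ℕ) : ZMod d) = χ a := by simp
    have hsign : (-1 : R) ^ (d * w + a) = (-1) ^ w * (-1) ^ a := by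
      rw [pow_add, pow_mul, hd.neg_one_pow]
    simp only [hχ, hsign, Algebra.smul_def, map_mul, map_pow, map_neg, map_one]
    ring

theorem altTwistedSum_lift (hd : Odd d) {w : ℕ} (hw : Odd w) {s M c : S}
    (h : (s ^ d + 1) * M = c * altTwistedSum χ s d) :
    (s ^ (d * w) + 1) * M = c * altTwistedSum χ s (d * w) := by
  rw [altTwistedSum_mul χ hd, pow_mul, ← hw.add_one_mul_neg_geom_sum]
  linear_combination (∑ j ∈ range w, (-s ^ d) ^ j) * h

theorem mul_altTwistedSum_comm (hd : Odd d) {w₁ w₂ : ℕ} (hw₁ : Odd w₁) (hw₂ : Odd w₂)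
    {u v M₁ M₂ c : S} (huv : u ^ w₂ = v ^ w₁) (hunit : IsUnit (u ^ (d * w₂) + 1))
    (h₁ : (u ^ d + 1) * M₁ = c * altTwistedSum χ u d)
    (h₂ : (v ^ d + 1) * M₂ = c * altTwistedSum χ v d) :
    M₁ * altTwistedSum χ v (d * w₁) = M₂ * altTwistedSum χ u (d * w₂) := by
  have h₁' := altTwistedSum_lift χ hd hw₂ h₁
  have h₂' := altTwistedSum_lift χ hd hw₁ h₂
  have hz : u ^ (d * w₂) = v ^ (d * w₁) := by rw [pow_mul', huv, ← pow_mul']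
  rw [hz] at hunit h₁'
  refine hunit.mul_left_cancel ?_
  linear_combination altTwistedSum χ v (d * w₁) * h₁' - altTwistedSum χ u (d * w₂) * h₂'

end AltTwistedSum

open Polynomial

section ScaleSubst

variable {K : Type*} [CommRing K]

noncomputable def scaleSubst (w w' : K) : PowerSeries K[X] →ₐ[K] PowerSeries K[X] where
  toRingHom := (PowerSeries.map (compRingHom (C w' * X))).comp (PowerSeries.rescale (C w))
  commutes' r := by
    refine PowerSeries.ext fun n => ?_
    rcases n with _ | n <;> simp [PowerSeries.algebraMap_apply, PowerSeries.coeff_C]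

theorem scaleSubst_apply (w w' : K) (f : PowerSeries K[X]) :
    scaleSubst w w' f = PowerSeries.map (compRingHom (C w' * X)) (PowerSeries.rescale (C w) f) :=
  rfl

theorem coeff_scaleSubst (w w' : K) (f : PowerSeries K[X]) (n : ℕ) :
    PowerSeries.coeff n (scaleSubst w w' f) =
      C (w ^ n) * (PowerSeries.coeff n f).comp (C w' * X) := by
  simp [scaleSubst_apply]

theorem scaleSubst_degSeries [Algebra ℚ K] (w w' : K) (y lam : K[X]) :
    scaleSubst w w' (degSeries y lam) =
      degSeries (C w * y.comp (C w' * X)) (C w * lam.comp (C w' * X)) := by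
  rw [scaleSubst_apply, rescale_degSeries, map_degSeries]
  simp

theorem scaleSubst_egf [Algebra ℚ K] (w w' : K) (a : ℕ → K[X]) :
    scaleSubst w w' (egf a) = egf fun n => C (w ^ n) * (a n).comp (C w' * X) := by
  ext n : 1
  simp [coeff_scaleSubst, coeff_egf, smul_comp]

end ScaleSubst

section GenDegEuler

variable {d : ℕ} {χ : DirichletCharacter ℂ d}

theorem genDegEulerRel.eq_altTwistedSum {mu : ℂ} {E : ℕ → ℂ[X]} (hE : genDegEulerRel d χ mu E) :
    (degSeries 1 (C mu) ^ d + 1) * egf E =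
      (2 * degSeries X (C mu)) * altTwistedSum χ (degSeries 1 (C mu)) d := by
  have hpow (n : ℕ) : degSeries 1 (C mu) ^ n = degSeries (C (n : ℂ)) (C mu) := by
    rw [degSeries_pow, mul_one, map_natCast]
  have hegf : egf E = PowerSeries.mk fun n => (n ! : ℂ)⁻¹ • E n := by
    ext n : 1
    simp [coeff_egf, inv_natCast_smul_eq ℚ ℂ]
  simp only [altTwistedSum, hpow, hegf]
  rw [hE]
  ring

theorem genDegEulerRel.map_scaleSubst {lam w : ℂ} (hw : w ≠ 0) (w' : ℂ) {E : ℕ → ℂ[X]}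
    (hE : genDegEulerRel d χ (lam / w) E) :
    (degSeries (C w) (C lam) ^ d + 1) * egf (fun n => C (w ^ n) * (E n).comp (C w' * X)) =
      (2 * degSeries (C (w * w') * X) (C lam)) * altTwistedSum χ (degSeries (C w) (C lam)) d := by
  have h := congrArg (scaleSubst w w') hE.eq_altTwistedSum
  simp only [map_mul, map_add, map_one, map_pow, map_ofNat, map_altTwistedSum, scaleSubst_degSeries,
    scaleSubst_egf] at h
  simp only [one_comp, X_comp, C_comp, mul_one, ← mul_assoc, ← C_mul, ← C_pow,
    mul_div_cancel₀ _ hw] at h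
  exact h

theorem two_mul_altTwistedSum_degSeries {w : ℂ} (hw : w ≠ 0) (lam : ℂ) {m : ℕ} (hm : 0 < m) :
    2 * altTwistedSum χ (degSeries (C w) (C lam)) m =
      egf fun k => C (w ^ k * Rsum d χ k (m - 1) (lam / w)) := by
  have hfall (l k : ℕ) :
      degFall ((l : ℂ[X]) * C w) (C lam) k = C (w ^ k * degFall (l : ℂ) (lam / w) k) := by
    have hlam : C lam = C w * C (lam / w) := by rw [← C_mul, mul_div_cancel₀ _ hw]
    rw [hlam, mul_comm (l : ℂ[X]), degFall_mul_mul, ← map_natCast C l, ← map_degFall, C_mul, C_pow]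
  ext k : 1
  rw [← map_ofNat PowerSeries.C 2, PowerSeries.coeff_C_mul, altTwistedSum, map_sum, coeff_egf, Rsum,
    Nat.sub_add_cancel hm]
  simp only [degSeries_pow]
  simp only [PowerSeries.coeff_smul, degSeries, PowerSeries.coeff_mk, hfall, smul_C, ← map_sum]
  rw [← C_ofNat, ← C_mul]
  congr 1
  simp only [Rat.smul_def, smul_eq_mul, mul_sum]
  refine sum_congr rfl fun l _ => ?_
  push_cast
  ring

theorem sum_range_choose_Rsum_eq_sum_antidiagonal (w w' lam : ℂ) (E : ℕ → ℂ[X]) (l m : ℕ) :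
    ∑ i ∈ range (l + 1),
        C ((l.choose i : ℂ) * w ^ i * w' ^ (l - i) * Rsum d χ (l - i) m (lam / w')) *
          (E i).comp (C w' * X) =
      ∑ ij ∈ antidiagonal l, (l.choose ij.1 : ℂ[X]) *
        ((C (w ^ ij.1) * (E ij.1).comp (C w' * X)) *
          C (w' ^ ij.2 * Rsum d χ ij.2 m (lam / w'))) := by
  rw [Nat.sum_antidiagonal_eq_sum_range_succ (fun i j => (l.choose i : ℂ[X]) *
    ((C (w ^ i) * (E i).comp (C w' * X)) * C (w' ^ j * Rsum d χ j m (lam / w'))))]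
  refine sum_congr rfl fun i _ => ?_
  simp only [C_mul, map_natCast]
  ring

end GenDegEuler

theorem genDegEuler_symmetry_general (d w₁ w₂ : ℕ) (hd : Odd d) (hw₁ : Odd w₁) (hw₂ : Odd w₂)
    (χ : DirichletCharacter ℂ d) (lam : ℂ)
    (E₁ E₂ : ℕ → Polynomial ℂ)
    (hE₁ : genDegEulerRel d χ (lam / w₁) E₁)
    (hE₂ : genDegEulerRel d χ (lam / w₂) E₂)
    (l : ℕ) :
    ∑ i ∈ Finset.range (l + 1),
        Polynomial.C ((l.choose i : ℂ) * (w₁ : ℂ) ^ i * (w₂ : ℂ) ^ (l - i) *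
            Rsum d χ (l - i) (d * w₁ - 1) (lam / w₂)) *
          (E₁ i).comp (Polynomial.C (w₂ : ℂ) * Polynomial.X)
      = ∑ i ∈ Finset.range (l + 1),
          Polynomial.C ((l.choose i : ℂ) * (w₂ : ℂ) ^ i * (w₁ : ℂ) ^ (l - i) *
              Rsum d χ (l - i) (d * w₂ - 1) (lam / w₁)) *
            (E₂ i).comp (Polynomial.C (w₁ : ℂ) * Polynomial.X) := by
  have hw₁0 : (w₁ : ℂ) ≠ 0 := Nat.cast_ne_zero.2 hw₁.pos.ne'
  have hw₂0 : (w₂ : ℂ) ≠ 0 := Nat.cast_ne_zero.2 hw₂.pos.ne'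
  have huv : degSeries (C (w₁ : ℂ)) (C lam) ^ w₂ = degSeries (C (w₂ : ℂ)) (C lam) ^ w₁ := by
    simp only [degSeries_pow, ← map_natCast C, ← C_mul, mul_comm]
  have hunit : IsUnit (degSeries (C (w₁ : ℂ)) (C lam) ^ (d * w₂) + 1) := by
    rw [degSeries_pow]
    exact isUnit_degSeries_add_one _ _
  have h₂ := hE₂.map_scaleSubst hw₂0 w₁
  rw [mul_comm (w₂ : ℂ)] at h₂
  have hsym := congrArg (2 * ·)
    (mul_altTwistedSum_comm χ hd hw₁ hw₂ huv hunit (hE₁.map_scaleSubst hw₁0 w₂) h₂)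
  simp only [mul_left_comm (2 : PowerSeries ℂ[X])] at hsym
  rw [two_mul_altTwistedSum_degSeries hw₂0 lam (Nat.mul_pos hd.pos hw₁.pos),
    two_mul_altTwistedSum_degSeries hw₁0 lam (Nat.mul_pos hd.pos hw₂.pos), egf_mul, egf_mul] at hsym
  rw [sum_range_choose_Rsum_eq_sum_antidiagonal, sum_range_choose_Rsum_eq_sum_antidiagonal]
  exact congrFun (egf_injective hsym) l

/-- identity of symmetry
`∑_{i≤l} C(l,i) 𝓔_{i,λ/w₁,χ}(w₂x) w₁^i w₂^{l−i} R_{l−i}(dw₁−1, λ/w₂|χ)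
 = ∑_{i≤l} C(l,i) 𝓔_{i,λ/w₂,χ}(w₁x) w₂^i w₁^{l−i} R_{l−i}(dw₂−1, λ/w₁|χ)`,
as polynomials in x over ℂ, for a fixed nonzero λ ∈ ℂ. -/
theorem genDegEuler_symmetry (d w₁ w₂ : ℕ) (hd0 : 0 < d) (hw₁0 : 0 < w₁) (hw₂0 : 0 < w₂)
    (hd : Odd d) (hw₁ : Odd w₁) (hw₂ : Odd w₂)
    (χ : DirichletCharacter ℂ d) (hχ : χ.conductor = d) (lam : ℂ) (hlam : lam ≠ 0)
    (E₁ E₂ : ℕ → Polynomial ℂ)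
    (hE₁ : genDegEulerRel d χ (lam / w₁) E₁)
    (hE₂ : genDegEulerRel d χ (lam / w₂) E₂)
    (l : ℕ) :
    ∑ i ∈ Finset.range (l + 1),
        Polynomial.C ((l.choose i : ℂ) * (w₁ : ℂ) ^ i * (w₂ : ℂ) ^ (l - i) *
            Rsum d χ (l - i) (d * w₁ - 1) (lam / w₂)) *
          (E₁ i).comp (Polynomial.C (w₂ : ℂ) * Polynomial.X)
      = ∑ i ∈ Finset.range (l + 1),
          Polynomial.C ((l.choose i : ℂ) * (w₂ : ℂ) ^ i * (w₁ : ℂ) ^ (l - i) *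
              Rsum d χ (l - i) (d * w₂ - 1) (lam / w₁)) *
            (E₂ i).comp (Polynomial.C (w₁ : ℂ) * Polynomial.X) :=
  genDegEuler_symmetry_general d w₁ w₂ hd hw₁ hw₂ χ lam E₁ E₂ hE₁ hE₂ l
end

section
/- Let p be an odd prime, d an odd positive integer coprime to p, and f : ℤ_p → ℂ_p continuous. Then the fermionic integral over X = lim← ℤ/dp^Nℤ agrees with that over ℤ_p: lim_{N→∞} ∑_{x=0}^{dp^N−1} f(x)(−1)^x = lim_{N→∞} ∑_{x=0}^{p^N−1} f(x)(−1)^x. -/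
/-!
Split `range (d * p ^ N)` into `d` blocks of length `p ^ N`. Since `p ^ N` is odd, the `k`-th block
is the `p ^ N`-sum of `x ↦ f (p ^ N * k + x)` with sign `(-1) ^ k`, and since `d` is odd these
signs add up to `1`. Hence the difference of the two sums is a signed sum of the increments
`f (p ^ N * k + a) - f a`, whose arguments are `p`-adically within `p ^ (-N)`; by the ultrametric
inequality it is bounded by the modulus of uniform continuity of `f` at scale `p ^ (-N)`.
-/

open Filter Finset Topology

theorem Finset.sum_range_mul_eq_sum_sum {M : Type*} [AddCommMonoid M] (g : ℕ → M) (d m : ℕ) :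
    ∑ x ∈ range (d * m), g x = ∑ k ∈ range d, ∑ a ∈ range m, g (m * k + a) := by
  induction d with
  | zero => simp
  | succ n ih => rw [sum_range_succ, ← ih, Nat.succ_mul, sum_range_add, Nat.mul_comm]

theorem sum_range_mul_neg_one_pow_sub_of_odd {R : Type*} [Ring R] {d m : ℕ} (hd : Odd d)
    (hm : Odd m) (g : ℕ → R) :
    ∑ x ∈ range (d * m), (-1) ^ x * g x - ∑ a ∈ range m, (-1) ^ a * g a
      = ∑ k ∈ range d, (-1) ^ k * ∑ a ∈ range m, (-1) ^ a * (g (m * k + a) - g a) := by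
  have hsigns : ∑ k ∈ range d, (-1 : R) ^ k = 1 := by
    rw [neg_one_geom_sum, if_neg (Nat.not_even_iff_odd.mpr hd)]
  have hblock (k a : ℕ) : (-1 : R) ^ (m * k + a) = (-1) ^ k * (-1) ^ a := by
    rw [pow_add, pow_mul, hm.neg_one_pow]
  have hsplit : ∑ a ∈ range m, (-1) ^ a * g a
      = ∑ k ∈ range d, (-1) ^ k * ∑ a ∈ range m, (-1) ^ a * g a := by
    rw [← sum_mul, hsigns, one_mul]
  rw [hsplit, sum_range_mul_eq_sum_sum, ← sum_sub_distrib]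
  refine sum_congr rfl fun k _ => ?_
  simp only [hblock, mul_assoc, ← mul_sum, ← mul_sub, ← sum_sub_distrib]

theorem norm_neg_one_pow_mul {R : Type*} [SeminormedRing R] (n : ℕ) (z : R) :
    ‖(-1) ^ n * z‖ = ‖z‖ := by
  rcases neg_one_pow_eq_or R n with h | h <;> simp [h]

theorem norm_sum_range_mul_neg_one_pow_sub_le {R : Type*} [SeminormedRing R]
    [IsUltrametricDist R] {d m : ℕ} (hd : Odd d) (hm : Odd m) (g : ℕ → R) {ε : ℝ} (hε : 0 ≤ ε)
    (hg : ∀ k < d, ∀ a < m, ‖g (m * k + a) - g a‖ ≤ ε) :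
    ‖∑ x ∈ range (d * m), (-1) ^ x * g x - ∑ a ∈ range m, (-1) ^ a * g a‖ ≤ ε := by
  rw [sum_range_mul_neg_one_pow_sub_of_odd hd hm]
  refine IsUltrametricDist.norm_sum_le_of_forall_le_of_nonneg hε fun k hk => ?_
  rw [norm_neg_one_pow_mul]
  refine IsUltrametricDist.norm_sum_le_of_forall_le_of_nonneg hε fun a ha => ?_
  rw [norm_neg_one_pow_mul]
  exact hg k (mem_range.1 hk) a (mem_range.1 ha)

theorem PadicInt.dist_natCast_pow_mul_add_le (p : ℕ) [Fact p.Prime] (N k a : ℕ) :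
    dist ((p ^ N * k + a : ℕ) : ℤ_[p]) a ≤ ‖(p : ℤ_[p])‖ ^ N := by
  rw [dist_eq_norm, Nat.cast_add, add_sub_cancel_right, Nat.cast_mul, Nat.cast_pow,
    norm_mul, norm_pow]
  exact mul_le_of_le_one_right (by positivity) (PadicInt.norm_le_one _)

theorem tendsto_sum_range_mul_pow_neg_one_pow_sub (p : ℕ) [Fact p.Prime] (hp : Odd p) {d : ℕ}
    (hd : Odd d) {K : Type*} [SeminormedRing K] [IsUltrametricDist K] {f : ℤ_[p] → K}
    (hf : UniformContinuous f) :
    Tendsto (fun N : ℕ => ∑ x ∈ range (d * p ^ N), (-1 : K) ^ x * f x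
      - ∑ x ∈ range (p ^ N), (-1 : K) ^ x * f x) atTop (𝓝 0) := by
  refine Metric.tendsto_nhds.2 fun ε hε => ?_
  obtain ⟨δ, hδ, hfδ⟩ := Metric.uniformContinuous_iff.1 hf (ε / 2) (half_pos hε)
  have hp_small : Tendsto (fun N : ℕ => ‖(p : ℤ_[p])‖ ^ N) atTop (𝓝 0) :=
    tendsto_pow_atTop_nhds_zero_of_lt_one (norm_nonneg _) Padic.norm_p_lt_one
  filter_upwards [hp_small.eventually (gt_mem_nhds hδ)] with N hN
  rw [dist_zero_right]
  refine (norm_sum_range_mul_neg_one_pow_sub_le hd hp.pow (fun x => f x) (half_pos hε).le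
    fun k _ a _ => ?_).trans_lt (half_lt_self hε)
  rw [← dist_eq_norm]
  exact (hfδ ((PadicInt.dist_natCast_pow_mul_add_le p N k a).trans_lt hN)).le

theorem fermionic_integral_X_eq_general (p : ℕ) [Fact p.Prime] (hp : Odd p)
    (d : ℕ) (hd : Odd d)
    (K : Type*) [NontriviallyNormedField K] [IsUltrametricDist K]
    (f : ℤ_[p] → K) (hf : Continuous f) (I : K)
    (hI : Filter.Tendsto
      (fun N : ℕ => ∑ x ∈ Finset.range (p ^ N), (-1 : K) ^ x * f (x : ℤ_[p]))
      Filter.atTop (nhds I)) :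
    Filter.Tendsto
      (fun N : ℕ => ∑ x ∈ Finset.range (d * p ^ N), (-1 : K) ^ x * f (x : ℤ_[p]))
      Filter.atTop (nhds I) := by
  have hdiff := tendsto_sum_range_mul_pow_neg_one_pow_sub p hp hd
    (CompactSpace.uniformContinuous_of_continuous hf)
  simpa using hI.add hdiff

/-- for an odd prime p, odd d coprime to p, the fermionic integral
over X = lim← ℤ/dp^Nℤ agrees with that over ℤ_p.  Since ℂ_p is not available in
Mathlib, the codomain is a complete nonarchimedean nontrivially normed field `K`. -/
theorem fermionic_integral_X_eq (p : ℕ) [Fact p.Prime] (hp : Odd p)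
    (d : ℕ) (hd0 : 0 < d) (hd : Odd d) (hdp : Nat.Coprime d p)
    (K : Type*) [NontriviallyNormedField K] [CompleteSpace K] [IsUltrametricDist K]
    (f : ℤ_[p] → K) (hf : Continuous f) (I : K)
    (hI : Filter.Tendsto
      (fun N : ℕ => ∑ x ∈ Finset.range (p ^ N), (-1 : K) ^ x * f (x : ℤ_[p]))
      Filter.atTop (nhds I)) :
    Filter.Tendsto
      (fun N : ℕ => ∑ x ∈ Finset.range (d * p ^ N), (-1 : K) ^ x * f (x : ℤ_[p]))
      Filter.atTop (nhds I) :=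
  fermionic_integral_X_eq_general p hp d hd K f hf I hI
end
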